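/- arXiv:0708.4386 — 3 statements merged into one kernel-verified Lean document; each statement's English description precedes it below -/
import Mathlib

section
/- Let R be a head-finite ring and let ε ∈ R. Then there exists α ∈ R such that 1 + ε + α·ε² is a unit of R. -/
/-!
Modulo the Jacobson radical, units lift, so it suffices to work in the semisimple, hence artinian,
ring `S = R/J(R)`. There the Fitting decomposition `S = K ⊕ V` for right multiplication by `ε^n`
(`n ≫ 0`), with `K = {x | x ε^n = 0}` and `V = S ε^n`, writes `1 = k + e`. Then `e ε = β ε²` for
some `β`, and `ε - β ε² = k ε` is nilpotent, so `1 + ε - β ε²` is a unit.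
-/

/-- The head `R/J(R)` of a ring `R`: the quotient of `R` by its Jacobson radical
(the intersection of all maximal left ideals, which is a two-sided ideal). -/
abbrev RingHead (R : Type*) [Ring R] : Type _ :=
  (TwoSidedIdeal.jacobson (⊥ : TwoSidedIdeal R)).ringCon.Quotient

/-- A ring `R` is *head-finite* if its head `R/J(R)` is a semisimple ring and, for every
simple `R/J(R)`-module `M`, the division ring `End_{R/J(R)}(M)` is finite-dimensional over
its center.  (By Artin–Wedderburn, this says exactly that in the Wedderburn decomposition
`R/J(R) ≅ ∏ Mat_{k i}(D i)`, each skew field `D i` is finite-dimensional over its center.) -/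
def IsHeadFinite (R : Type u) [Ring R] : Prop :=
  IsSemisimpleRing (RingHead R) ∧
    ∀ (M : Type u) (_ : AddCommGroup M) (_ : Module (RingHead R) M),
      IsSimpleModule (RingHead R) M →
        Module.Finite (Subring.center (Module.End (RingHead R) M))
          (Module.End (RingHead R) M)

open LinearMap

section Fitting

variable {S : Type*} [Ring S]

theorem LinearMap.toSpanSingleton_self_pow (ε : S) (n : ℕ) :
    toSpanSingleton S S ε ^ n = toSpanSingleton S S (ε ^ n) := by
  induction n with
  | zero => ext; simp
  | succ n ih => ext; rw [pow_succ', Module.End.mul_apply, ih]; simp [pow_succ]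

theorem exists_isNilpotent_sub_mul_sq_of_isCompl {ε : S} {n : ℕ}
    (h : IsCompl (ker (toSpanSingleton S S (ε ^ (n + 1))))
      (range (toSpanSingleton S S (ε ^ (n + 1))))) :
    ∃ β, IsNilpotent (ε - β * ε ^ 2) := by
  set K := ker (toSpanSingleton S S (ε ^ (n + 1)))
  set V := range (toSpanSingleton S S (ε ^ (n + 1)))
  have mem_K {x : S} : x ∈ K ↔ x * ε ^ (n + 1) = 0 := by simp [K]
  obtain ⟨k, hk, e, ⟨z, rfl⟩, hke⟩ :=
    Submodule.mem_sup.mp (h.codisjoint.eq_top ▸ Submodule.mem_top (x := (1 : S)))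
  simp only [toSpanSingleton_apply, smul_eq_mul] at hke
  refine ⟨z * ε ^ n, ⟨n + 1, ?_⟩⟩
  -- For `x ∈ K`, `x e = x - x k` lies in `K ⊓ V = ⊥`.
  have right_mul_k {x : S} (hx : x ∈ K) : x * k = x := by
    have : x * (z * ε ^ (n + 1)) = 0 := by
      refine Submodule.disjoint_def.mp h.disjoint _ ?_ (V.smul_mem x ⟨z, rfl⟩)
      rw [← add_sub_cancel_left (x * k) (x * _), ← mul_add, hke, mul_one]
      exact K.sub_mem hx (K.smul_mem x hk)
    calc x * k = x * k + x * (z * ε ^ (n + 1)) := by rw [this, add_zero]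
      _ = x := by rw [← mul_add, hke, mul_one]
  have hkε : k * ε ∈ K := by
    rw [mem_K, mul_assoc, (Commute.self_pow ε _).eq, ← mul_assoc, mem_K.mp hk, zero_mul]
  have pow_kε (m : ℕ) : (k * ε) ^ (m + 1) = k * ε ^ (m + 1) := by
    induction m with
    | zero => simp
    | succ m ih => rw [pow_succ', ih, ← mul_assoc, right_mul_k hkε, mul_assoc, ← pow_succ']
  have : ε - z * ε ^ n * ε ^ 2 = k * ε := by
    rw [eq_sub_of_add_eq hke, sub_mul, one_mul, mul_assoc, mul_assoc, ← pow_add, ← pow_succ]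
  rw [this, pow_kε, mem_K.mp hk]

end Fitting

namespace IsArtinianRing

variable {S : Type*} [Ring S] [IsArtinianRing S]

theorem exists_isNilpotent_sub_mul_sq (ε : S) : ∃ β, IsNilpotent (ε - β * ε ^ 2) := by
  obtain ⟨n, hn⟩ :=
    (eventually_isCompl_ker_pow_range_pow (toSpanSingleton S S ε)).exists_forall_of_atTop
  have h := hn (n + 1) n.le_succ
  rw [toSpanSingleton_self_pow] at h
  exact exists_isNilpotent_sub_mul_sq_of_isCompl h

theorem exists_isUnit_one_add_add_mul_sq (ε : S) : ∃ α, IsUnit (1 + ε + α * ε ^ 2) := by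
  obtain ⟨β, hβ⟩ := exists_isNilpotent_sub_mul_sq ε
  exact ⟨-β, by simpa [add_assoc, sub_eq_add_neg] using hβ.isUnit_one_add⟩

end IsArtinianRing

namespace TwoSidedIdeal

variable {R : Type*} [Ring R]

theorem isUnit_one_add_of_mem_jacobson_bot {x : R} (hx : x ∈ jacobson (⊥ : TwoSidedIdeal R)) :
    IsUnit (1 + x) := by
  obtain ⟨s, hs⟩ := mem_jacobson_iff.mp hx 1
  obtain ⟨t, ht⟩ := mem_jacobson_iff.mp hx (-s)
  simp only [mul_one, mem_bot, sub_eq_zero] at hs ht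
  -- `s` is a left inverse of `1 + x`, and `s = 1 - s x` has the left inverse `t`.
  have hs' : s * (1 + x) = 1 := by rw [mul_add, mul_one, add_comm, hs]
  have ht' : t * s = 1 :=
    calc t * s = t * (1 - s * x) := by rw [← eq_sub_of_add_eq' hs]
      _ = t * -s * x + t := by noncomm_ring
      _ = 1 := ht
  exact isUnit_iff_exists_and_exists.mpr ⟨⟨s, left_inv_eq_right_inv ht' hs' ▸ ht'⟩, ⟨s, hs'⟩⟩

theorem isLocalHom_ringCon_mk' {I : TwoSidedIdeal R} (hI : I ≤ jacobson ⊥) :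
    IsLocalHom I.ringCon.mk' := by
  refine ⟨fun r ⟨u, hu⟩ ↦ ?_⟩
  have isUnit_of_mk'_eq_one {a : R} (ha : I.ringCon.mk' a = 1) : IsUnit a := by
    rw [← map_one I.ringCon.mk', RingCon.coe_mk', RingCon.eq, rel_iff] at ha
    simpa using isUnit_one_add_of_mem_jacobson_bot (hI ha)
  obtain ⟨s, hs⟩ := I.ringCon.mk'_surjective ↑u⁻¹
  have hrs : I.ringCon.mk' (r * s) = 1 := by rw [map_mul, hs, ← hu, Units.mul_inv]
  have hsr : I.ringCon.mk' (s * r) = 1 := by rw [map_mul, hs, ← hu, Units.inv_mul]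
  obtain ⟨c, hc⟩ := (isUnit_of_mk'_eq_one hrs).exists_right_inv
  obtain ⟨d, hd⟩ := (isUnit_of_mk'_eq_one hsr).exists_left_inv
  exact isUnit_iff_exists_and_exists.mpr
    ⟨⟨s * c, by rw [← mul_assoc, hc]⟩, ⟨d * s, by rw [mul_assoc, hd]⟩⟩

end TwoSidedIdeal

/-- Let `R` be a head-finite ring and `ε ∈ R`.  Then there exists `α ∈ R` such that
`1 + ε + α·ε²` is a unit of `R`. -/
theorem exists_unit_one_add_add_mul_sq (R : Type u) [Ring R] (hR : IsHeadFinite R)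
    (ε : R) : ∃ α : R, IsUnit (1 + ε + α * ε ^ 2) := by
  have : IsSemisimpleRing (RingHead R) := hR.1
  let π := (TwoSidedIdeal.jacobson (⊥ : TwoSidedIdeal R)).ringCon.mk'
  have : IsLocalHom π := TwoSidedIdeal.isLocalHom_ringCon_mk' le_rfl
  obtain ⟨α', hα'⟩ := IsArtinianRing.exists_isUnit_one_add_add_mul_sq (π ε)
  obtain ⟨α, rfl⟩ := RingCon.mk'_surjective _ α'
  refine ⟨α, IsUnit.of_map π _ ?_⟩
  rwa [map_add, map_add, map_one, map_mul, map_pow]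
end

section
/- Let K be a field, let R be a finite-dimensional K-algebra, and let ε ∈ R. Then there exists α ∈ R with α·ε = ε·α such that 1 + ε + α·ε² is a unit of R. -/
open Polynomial

/-- In a commutative ring, any strongly π-regular element `x` satisfies the conclusion. -/
lemma aux_unit {A : Type*} [CommRing A] (x y : A) (n : ℕ) (hy : x ^ (n + 1) * y = x ^ n) :
    ∃ α : A, IsUnit (1 + x + α * x ^ 2) := by
  have hk : ∀ k, x ^ (n + k) * y ^ k = x ^ n := by
    intro k
    induction k with
    | zero => simp
    | succ k ih => linear_combination (x ^ k * y ^ k) * hy + ih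
  refine ⟨-(y * (x ^ n * y ^ n)), ?_⟩
  have key : 1 + x + -(y * (x ^ n * y ^ n)) * x ^ 2 = 1 + x * (1 - x ^ n * y ^ n) := by
    linear_combination (-(x * y ^ n)) * hy
  rw [key]
  have hpow : ∀ k : ℕ, (1 - x ^ n * y ^ n) ^ (k + 1) = 1 - x ^ n * y ^ n := by
    intro k
    induction k with
    | zero => simp
    | succ k ih =>
      rw [pow_succ, ih]
      linear_combination y ^ n * hk n
  have hnil : IsNilpotent (x * (1 - x ^ n * y ^ n)) := by
    refine ⟨n + 1, ?_⟩
    rw [mul_pow, hpow n]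
    linear_combination (-x) * hk n
  exact hnil.isUnit_one_add

/-- Let `K` be a field, `R` a finite-dimensional `K`-algebra and `ε ∈ R`.  Then there
exists `α ∈ R` commuting with `ε` such that `1 + ε + α·ε²` is a unit of `R`. -/
theorem exists_commuting_unit_one_add_add_mul_sq (K : Type u) (R : Type v) [Field K]
    [Ring R] [Algebra K R] [FiniteDimensional K R] (ε : R) :
    ∃ α : R, α * ε = ε * α ∧ IsUnit (1 + ε + α * ε ^ 2) := by
  classical
  have hint : IsIntegral K ε := Algebra.IsIntegral.isIntegral ε
  set p := minpoly K ε with hpdef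
  have hp0 : p ≠ 0 := minpoly.ne_zero hint
  -- work in the commutative ring `B = K[X]/(p)`
  set B := AdjoinRoot p with hB
  set x : B := AdjoinRoot.root p with hx
  have haev : aeval x p = 0 := by
    rw [AdjoinRoot.aeval_eq, AdjoinRoot.mk_self]
  obtain ⟨q, hpq, hq⟩ := p.exists_eq_pow_rootMultiplicity_mul_and_not_dvd hp0 0
  set n := p.rootMultiplicity 0 with hn
  simp only [C_0, sub_zero, X_dvd_iff] at hpq hq
  have hqx : x ^ n * aeval x q = 0 := by
    have haev2 : aeval x (X ^ n * q) = 0 := by rw [← hpq]; exact haev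
    rw [map_mul, map_pow, aeval_X] at haev2
    exact haev2
  set c := q.coeff 0 with hc
  set h : B := aeval x q.divX with hh
  have hqsplit : aeval x q = x * h + algebraMap K B c := by
    conv_lhs => rw [← Polynomial.X_mul_divX_add (p := q)]
    rw [map_add, map_mul, aeval_X, aeval_C]
  have hy : x ^ (n + 1) * ((-c⁻¹) • h) = x ^ n := by
    have h1 : x ^ (n + 1) * h = -(algebraMap K B c * x ^ n) := by
      have h0 := hqx
      rw [hqsplit, mul_add] at h0
      linear_combination h0
    rw [mul_smul_comm, h1, smul_neg, neg_smul, neg_neg, Algebra.smul_def, ← mul_assoc,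
      ← map_mul, inv_mul_cancel₀ hq, map_one, one_mul]
  obtain ⟨α', hα'⟩ := aux_unit x ((-c⁻¹) • h) n hy
  -- map everything to `R` via the quotient lift of `aeval ε`
  let ψ : K[X] →+* R := (aeval ε : K[X] →ₐ[K] R).toRingHom
  have hker : ∀ g ∈ Ideal.span ({p} : Set K[X]), ψ g = 0 := by
    intro g hg
    rcases Ideal.mem_span_singleton.mp hg with ⟨y, rfl⟩
    have : aeval ε (p * y) = aeval ε p * aeval ε y := map_mul _ _ _
    simp only [ψ, AlgHom.toRingHom_eq_coe, RingHom.coe_coe]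
    rw [this, hpdef, minpoly.aeval, zero_mul]
  let φ : B →+* R := Ideal.Quotient.lift (Ideal.span ({p} : Set K[X])) ψ hker
  have hφmk : ∀ g : K[X], φ (AdjoinRoot.mk p g) = aeval ε g := fun g =>
    Ideal.Quotient.lift_mk _ _ _
  have hφx : φ x = ε := by
    rw [hx, AdjoinRoot.root, hφmk, aeval_X]
  refine ⟨φ α', ?_, ?_⟩
  · have h2 : φ (α' * x) = φ (x * α') := by rw [mul_comm]
    rw [map_mul, map_mul, hφx] at h2
    exact h2
  · have h3 := hα'.map φ
    rw [map_add, map_add, map_one, map_mul, map_pow, hφx] at h3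
    exact h3
end

section
/- Let a ≥ 3 be an integer. In the bounded homotopy category K^b(ℤ-proj) of complexes of finitely generated free abelian groups, consider the objects B = (ℤ → ℤ², degrees 0 and 1, differential the column (−a³, a²)), B' = (ℤ → ℤ, degrees 0 and 1, differential a²), C = (ℤ → ℤ, degrees 0 and 1, differential a²), C' = ℤ concentrated in degree 0, and the morphisms (given by chain maps) g : B → C with degree-0 component a and degree-1 component the row (−1, 0); b : B → B' with degree-0 component 1 and degree-1 component the row (0, 1); g' : B' → C' with degree-0 component a; and c : C → C' with degree-0 component 1 + a. Then this square commutes in K^b(ℤ-proj) (i.e. c∘g and g'∘b are homotopic), but it is NOT homotopy cartesian: there exists no morphism δ : C' → B[1] such that the triangle B → B' ⊕ C → C' → B[1], with first map of components (b, g) and second map of components (g', −c), is distinguished. -/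
open CategoryTheory Limits Pretriangulated

namespace KbFree

/-- The free `ℤ`-module of rank `k`, as an object of `ModuleCat ℤ`. -/
abbrev V (k : ℕ) : ModuleCat ℤ := ModuleCat.of ℤ (Fin k → ℤ)

/-- The morphism `V k ⟶ V l` given by an `l × k` integer matrix. -/
abbrev mt {k l : ℕ} (A : Matrix (Fin l) (Fin k) ℤ) : V k ⟶ V l := ModuleCat.ofHom A.mulVecLin

lemma mt_comp {k l m : ℕ} (A : Matrix (Fin l) (Fin k) ℤ) (B : Matrix (Fin m) (Fin l) ℤ) :
    mt A ≫ mt B = mt (B * A) := by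
  ext1; exact (Matrix.mulVecLin_mul B A).symm

lemma mt_zero {k l : ℕ} : mt (0 : Matrix (Fin l) (Fin k) ℤ) = 0 := by
  ext1; exact Matrix.mulVecLin_zero

lemma mt_add {k l : ℕ} (A B : Matrix (Fin l) (Fin k) ℤ) : mt (A + B) = mt A + mt B := by
  ext1; exact Matrix.mulVecLin_add A B


lemma mat_eq_of_cols0 {k : ℕ} (A B : Matrix (Fin k) (Fin 0) ℤ) : A = B := by
  funext i j; exact j.elim0

lemma mat_eq_of_rows0 {k : ℕ} (A B : Matrix (Fin 0) (Fin k) ℤ) : A = B := by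
  funext i j; exact i.elim0

lemma homs_eq_of_src {k l : ℕ} (hk : k = 0) (f g : V k ⟶ V l) : f = g := by
  subst hk
  ext1
  apply LinearMap.ext
  intro x
  rw [Subsingleton.elim x 0, map_zero, map_zero]

lemma homs_eq_of_tgt {k l : ℕ} (hl : l = 0) (f g : V k ⟶ V l) : f = g := by
  subst hl
  ext1
  apply LinearMap.ext
  intro x
  apply Subsingleton.elim

/-- Case analysis on integers: `0`, `1`, `2`, other nonnegative, negative. -/
theorem int_cases3 {P : ℤ → Prop} (h0 : P 0) (h1 : P 1) (h2 : P 2)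
    (ho : ∀ m : ℕ, P (Int.ofNat (m + 3))) (hn : ∀ m : ℕ, P (Int.negSucc m)) : ∀ n : ℤ, P n
  | (0 : ℤ) => h0
  | (1 : ℤ) => h1
  | (2 : ℤ) => h2
  | Int.ofNat (m + 3) => ho m
  | Int.negSucc m => hn m

/-- Build a cochain complex of finitely generated free abelian groups from a rank function
`r : ℤ → ℕ` and degreewise differentials. -/
noncomputable def mkC (r : ℤ → ℕ) (d : ∀ n : ℤ, V (r n) ⟶ V (r (n + 1)))
    (w : ∀ n, d n ≫ d (n + 1) = 0) : CochainComplex (ModuleCat ℤ) ℤ where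
  X n := V (r n)
  d i j := if h : i + 1 = j then d i ≫ eqToHom (congrArg (fun t => V (r t)) h) else 0
  shape _ _ h := dif_neg h
  d_comp_d' i j k hij hjk := by
    obtain rfl : j = i + 1 := hij.symm
    obtain rfl : k = (i + 1) + 1 := hjk.symm
    simp only [dif_pos rfl, eqToHom_refl, Category.comp_id]
    exact w i

lemma mkC_d (r : ℤ → ℕ) (d : ∀ n : ℤ, V (r n) ⟶ V (r (n + 1)))
    (w : ∀ n, d n ≫ d (n + 1) = 0) (n : ℤ) : (mkC r d w).d n (n + 1) = d n := by
  show (if h : n + 1 = n + 1 then d n ≫ eqToHom (congrArg (fun t => V (r t)) h) else 0) = d n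
  rw [dif_pos rfl, eqToHom_refl, Category.comp_id]

/-- Build a morphism of complexes from degreewise data. -/
noncomputable def mkHom {r s : ℤ → ℕ} {dX : ∀ n : ℤ, V (r n) ⟶ V (r (n + 1))}
    {dY : ∀ n : ℤ, V (s n) ⟶ V (s (n + 1))} {wX wY}
    (f : ∀ n : ℤ, V (r n) ⟶ V (s n))
    (comm : ∀ n : ℤ, dX n ≫ f (n + 1) = f n ≫ dY n) : mkC r dX wX ⟶ mkC s dY wY where
  f n := f n
  comm' i j hij := by
    obtain rfl : j = i + 1 := hij.symm
    show f i ≫ (mkC s dY wY).d i (i + 1) = (mkC r dX wX).d i (i + 1) ≫ f (i + 1)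
    rw [mkC_d, mkC_d]
    exact (comm i).symm

/-- Build a morphism from a complex to the shift by `1` of another complex, from
degreewise data. -/
noncomputable def mkHomShift {r s : ℤ → ℕ} {dX : ∀ n : ℤ, V (r n) ⟶ V (r (n + 1))}
    {dY : ∀ n : ℤ, V (s n) ⟶ V (s (n + 1))} {wX wY}
    (f : ∀ n : ℤ, V (r n) ⟶ V (s (n + 1)))
    (comm : ∀ n : ℤ, dX n ≫ f (n + 1) + f n ≫ dY (n + 1) = 0) :
    mkC r dX wX ⟶ (mkC s dY wY)⟦(1 : ℤ)⟧ where
  f n := (f n : V (r n) ⟶ V (s (n + 1)))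
  comm' i j hij := by
    obtain rfl : j = i + 1 := hij.symm
    have h1 : ((mkC s dY wY)⟦(1 : ℤ)⟧).d i (i + 1) = -(dY (i + 1)) := by
      rw [CochainComplex.shiftFunctor_obj_d', mkC_d]
      simp [Units.smul_def]
      exact neg_one_smul ℤ _
    show f i ≫ ((mkC s dY wY)⟦(1 : ℤ)⟧).d i (i + 1) = (mkC r dX wX).d i (i + 1) ≫ f (i + 1)
    rw [h1, mkC_d]
    have h2 := comm i
    rw [add_eq_zero_iff_eq_neg] at h2
    erw [Preadditive.comp_neg]
    exact h2.symm

/-- Ranks of a complex concentrated in degrees `0`, `1`, `2`. -/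
def rk3 (r₀ r₁ r₂ : ℕ) : ℤ → ℕ
  | 0 => r₀
  | 1 => r₁
  | 2 => r₂
  | _ => 0

/-- Differentials of a complex concentrated in degrees `0`, `1`, `2`. -/
noncomputable def d3 (r₀ r₁ r₂ : ℕ) (D₀ : Matrix (Fin r₁) (Fin r₀) ℤ)
    (D₁ : Matrix (Fin r₂) (Fin r₁) ℤ) :
    ∀ n : ℤ, V (rk3 r₀ r₁ r₂ n) ⟶ V (rk3 r₀ r₁ r₂ (n + 1))
  | 0 => mt D₀
  | 1 => mt D₁
  | _ => 0

/-- The bounded complex of finitely generated free abelian groups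
`ℤ^{r₀} → ℤ^{r₁} → ℤ^{r₂}` concentrated in degrees `0`, `1`, `2`, with differentials the
matrices `D₀` and `D₁`. -/
noncomputable def mk3 (r₀ r₁ r₂ : ℕ) (D₀ : Matrix (Fin r₁) (Fin r₀) ℤ)
    (D₁ : Matrix (Fin r₂) (Fin r₁) ℤ) (w : D₁ * D₀ = 0) :
    CochainComplex (ModuleCat ℤ) ℤ :=
  mkC (rk3 r₀ r₁ r₂) (d3 r₀ r₁ r₂ D₀ D₁) (by
    refine int_cases3 ?_ ?_ ?_ (fun m => ?_) (fun m => ?_)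
    · show mt D₀ ≫ mt D₁ = 0
      rw [mt_comp, w, mt_zero]
    · exact homs_eq_of_tgt rfl _ _
    · exact homs_eq_of_tgt rfl _ _
    · exact homs_eq_of_src rfl _ _
    · exact homs_eq_of_src rfl _ _)

/-- Degreewise components, given by matrices, of a morphism between complexes concentrated
in degrees `0`, `1`, `2`. -/
noncomputable def f3 {r₀ r₁ r₂ : ℕ} (s₀ s₁ s₂ : ℕ) (F₀ : Matrix (Fin s₀) (Fin r₀) ℤ)
    (F₁ : Matrix (Fin s₁) (Fin r₁) ℤ) (F₂ : Matrix (Fin s₂) (Fin r₂) ℤ) :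
    ∀ n : ℤ, V (rk3 r₀ r₁ r₂ n) ⟶ V (rk3 s₀ s₁ s₂ n)
  | 0 => mt F₀
  | 1 => mt F₁
  | 2 => mt F₂
  | Int.ofNat (_ + 3) => 0
  | Int.negSucc _ => 0

/-- A morphism between complexes concentrated in degrees `0`, `1`, `2`, given by matrices
`F₀`, `F₁`, `F₂` commuting with the differentials. -/
noncomputable def mkHom3 {r₀ r₁ r₂ : ℕ} {D₀ : Matrix (Fin r₁) (Fin r₀) ℤ}
    {D₁ : Matrix (Fin r₂) (Fin r₁) ℤ} {wD}
    {s₀ s₁ s₂ : ℕ} {E₀ : Matrix (Fin s₁) (Fin s₀) ℤ} {E₁ : Matrix (Fin s₂) (Fin s₁) ℤ} {wE}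
    (F₀ : Matrix (Fin s₀) (Fin r₀) ℤ) (F₁ : Matrix (Fin s₁) (Fin r₁) ℤ)
    (F₂ : Matrix (Fin s₂) (Fin r₂) ℤ)
    (c₀ : F₁ * D₀ = E₀ * F₀) (c₁ : F₂ * D₁ = E₁ * F₁) :
    mk3 r₀ r₁ r₂ D₀ D₁ wD ⟶ mk3 s₀ s₁ s₂ E₀ E₁ wE :=
  mkHom (f3 s₀ s₁ s₂ F₀ F₁ F₂) (by
    refine int_cases3 ?_ ?_ ?_ (fun m => ?_) (fun m => ?_)
    · show mt D₀ ≫ mt F₁ = mt F₀ ≫ mt E₀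
      rw [mt_comp, mt_comp, c₀]
    · show mt D₁ ≫ mt F₂ = mt F₁ ≫ mt E₁
      rw [mt_comp, mt_comp, c₁]
    · exact homs_eq_of_tgt rfl _ _
    · exact homs_eq_of_src rfl _ _
    · exact homs_eq_of_src rfl _ _)

/-- Degreewise components, given by matrices, of a morphism from a complex concentrated in
degrees `0`, `1`, `2` to the shift by one of another such complex. -/
noncomputable def fs3 {r₀ r₁ r₂ : ℕ} (s₀ s₁ s₂ : ℕ) (G₀ : Matrix (Fin s₁) (Fin r₀) ℤ)
    (G₁ : Matrix (Fin s₂) (Fin r₁) ℤ) :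
    ∀ n : ℤ, V (rk3 r₀ r₁ r₂ n) ⟶ V (rk3 s₀ s₁ s₂ (n + 1))
  | 0 => mt G₀
  | 1 => mt G₁
  | 2 => 0
  | Int.ofNat (_ + 3) => 0
  | Int.negSucc _ => 0

/-- A morphism from a complex concentrated in degrees `0`, `1`, `2` to the shift by one of
another such complex, given by matrices `G₀`, `G₁` anticommuting with the differentials. -/
noncomputable def mkHomShift3 {r₀ r₁ r₂ : ℕ} {D₀ : Matrix (Fin r₁) (Fin r₀) ℤ}
    {D₁ : Matrix (Fin r₂) (Fin r₁) ℤ} {wD}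
    {s₀ s₁ s₂ : ℕ} {E₀ : Matrix (Fin s₁) (Fin s₀) ℤ} {E₁ : Matrix (Fin s₂) (Fin s₁) ℤ} {wE}
    (G₀ : Matrix (Fin s₁) (Fin r₀) ℤ) (G₁ : Matrix (Fin s₂) (Fin r₁) ℤ)
    (c₀ : G₁ * D₀ + E₁ * G₀ = 0) :
    mk3 r₀ r₁ r₂ D₀ D₁ wD ⟶ (mk3 s₀ s₁ s₂ E₀ E₁ wE)⟦(1 : ℤ)⟧ :=
  mkHomShift (fs3 s₀ s₁ s₂ G₀ G₁) (by
    refine int_cases3 ?_ ?_ ?_ (fun m => ?_) (fun m => ?_)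
    · show mt D₀ ≫ mt G₁ + mt G₀ ≫ mt E₁ = 0
      rw [mt_comp, mt_comp, ← mt_add, c₀, mt_zero]
    · exact homs_eq_of_tgt rfl _ _
    · exact homs_eq_of_tgt rfl _ _
    · exact homs_eq_of_src rfl _ _
    · exact homs_eq_of_src rfl _ _)


/-! ### The square of Section 3 -/

/-- The quotient functor onto the homotopy category of cochain complexes. -/
noncomputable abbrev Q :
    CochainComplex (ModuleCat ℤ) ℤ ⥤ HomotopyCategory (ModuleCat ℤ) (ComplexShape.up ℤ) :=
  HomotopyCategory.quotient _ _

/-- The complex `ℤ → ℤ²` concentrated in degrees `0` and `1`, with differential the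
column `(-a³, a²)`. -/
noncomputable def Bc (a : ℤ) : CochainComplex (ModuleCat ℤ) ℤ :=
  mk3 1 2 0 !![-a ^ 3; a ^ 2] 0 (mat_eq_of_rows0 _ _)

/-- The complex `ℤ → ℤ` concentrated in degrees `0` and `1`, with differential `a²`. -/
noncomputable def Bc' (a : ℤ) : CochainComplex (ModuleCat ℤ) ℤ :=
  mk3 1 1 0 !![a ^ 2] 0 (mat_eq_of_rows0 _ _)

/-- The complex `ℤ → ℤ` concentrated in degrees `0` and `1`, with differential `a²`. -/
noncomputable def Cc (a : ℤ) : CochainComplex (ModuleCat ℤ) ℤ :=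
  mk3 1 1 0 !![a ^ 2] 0 (mat_eq_of_rows0 _ _)

/-- The complex `ℤ` concentrated in degree `0`. -/
noncomputable def Cc' : CochainComplex (ModuleCat ℤ) ℤ :=
  mk3 1 0 0 0 0 (mat_eq_of_rows0 _ _)

/-- The chain map `g : B ⟶ C` with degree-0 component `a` and degree-1 component the
row `(-1, 0)`. -/
noncomputable def gm (a : ℤ) : Bc a ⟶ Cc a :=
  mkHom3 !![a] !![-1, 0] 0
    (by ext i j; fin_cases i <;> fin_cases j <;>
      simp [Matrix.mul_apply, Fin.sum_univ_succ] <;> ring)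
    (mat_eq_of_rows0 _ _)

/-- The chain map `b : B ⟶ B'` with degree-0 component `1` and degree-1 component the
row `(0, 1)`. -/
noncomputable def bm (a : ℤ) : Bc a ⟶ Bc' a :=
  mkHom3 !![1] !![0, 1] 0
    (by ext i j; fin_cases i <;> fin_cases j <;>
      simp [Matrix.mul_apply, Fin.sum_univ_succ] <;> ring)
    (mat_eq_of_rows0 _ _)

/-- The chain map `g' : B' ⟶ C'` with degree-0 component `a`. -/
noncomputable def gm' (a : ℤ) : Bc' a ⟶ Cc' :=
  mkHom3 !![a] 0 0 (mat_eq_of_rows0 _ _) (mat_eq_of_rows0 _ _)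

/-- The chain map `c : C ⟶ C'` with degree-0 component `1 + a`. -/
noncomputable def cm (a : ℤ) : Cc a ⟶ Cc' :=
  mkHom3 !![1 + a] 0 0 (mat_eq_of_rows0 _ _) (mat_eq_of_rows0 _ _)

end KbFree

/-!
The square commutes because `c ∘ g - g' ∘ b` is multiplication by `a²` in degree `0`, which is
`h ∘ d_B` for the row `h = (0, 1) : B¹ → C'⁰`.

The map `(b, g) : B → B' ⊕ C` is a degreewise split monomorphism with degreewise cokernel `C'`,
given by the row `(-a, 1)` in degree `0`, so `B → B' ⊕ C → C' → B⟦1⟧` is distinguished. Any other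
distinguished triangle on `(b, g)` is isomorphic to this one by an isomorphism that is the
identity on `B` and on `B' ⊕ C`; if its second map were `(g', -c)`, then
`(g', -c) = (-a, 1) ≫ φ` for an automorphism `φ` of `C'` in the homotopy category, and on the
summand `C` this makes `-c` homotopic to the map that is `φ` in degree `0`. As `C'` lives in
degree `0`, `φ` is a unit `u = ±1`, while homotopies `C → C'` change degree-`0` components by
multiples of `a²`. Hence `a² ∣ u + 1 + a ∈ {a, a + 2}`, which is impossible for `a ≥ 3`.
-/

namespace KbFree

open HomologicalComplex

lemma mt_one {k : ℕ} : mt (1 : Matrix (Fin k) (Fin k) ℤ) = 𝟙 (V k) := by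
  ext1; exact Matrix.mulVecLin_one

lemma mt_comp_eq_id {k l : ℕ} {A : Matrix (Fin l) (Fin k) ℤ} {B : Matrix (Fin k) (Fin l) ℤ}
    (h : B * A = 1) : mt A ≫ mt B = 𝟙 (V k) := by
  rw [mt_comp, h, mt_one]

lemma mt_comp_add_mt_comp_eq_id {k l m : ℕ} {A : Matrix (Fin l) (Fin k) ℤ}
    {B : Matrix (Fin k) (Fin l) ℤ} {C : Matrix (Fin m) (Fin k) ℤ} {D : Matrix (Fin k) (Fin m) ℤ}
    (h : B * A + D * C = 1) : mt A ≫ mt B + mt C ≫ mt D = 𝟙 (V k) := by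
  rw [mt_comp, mt_comp, ← mt_add, h, mt_one]

lemma toMatrix'_mt {k l : ℕ} (A : Matrix (Fin l) (Fin k) ℤ) :
    LinearMap.toMatrix' (mt A).hom = A :=
  LinearMap.toMatrix'_toLin' A

lemma toMatrix'_mt_comp_add {k l m : ℕ} (A : Matrix (Fin l) (Fin k) ℤ) (H : V l ⟶ V m)
    (ψ : V k ⟶ V m) :
    LinearMap.toMatrix' (mt A ≫ H + ψ).hom =
      LinearMap.toMatrix' H.hom * A + LinearMap.toMatrix' ψ.hom := by
  rw [ModuleCat.hom_add, map_add, ModuleCat.hom_comp, LinearMap.toMatrix'_comp, toMatrix'_mt]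

lemma isZero_V_zero : IsZero (V 0) :=
  ModuleCat.isZero_of_subsingleton _

section Mk3

variable {r₀ r₁ r₂ : ℕ} {D₀ : Matrix (Fin r₁) (Fin r₀) ℤ} {D₁ : Matrix (Fin r₂) (Fin r₁) ℤ}
  {wD : D₁ * D₀ = 0} {s₀ s₁ s₂ : ℕ} {E₀ : Matrix (Fin s₁) (Fin s₀) ℤ}
  {E₁ : Matrix (Fin s₂) (Fin s₁) ℤ} {wE : E₁ * E₀ = 0} {t₀ t₁ t₂ : ℕ}
  {K₀ : Matrix (Fin t₁) (Fin t₀) ℤ} {K₁ : Matrix (Fin t₂) (Fin t₁) ℤ} {wK : K₁ * K₀ = 0}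

lemma mk3_d_zero_one : (mk3 r₀ r₁ r₂ D₀ D₁ wD).d 0 1 = mt D₀ :=
  mkC_d _ _ _ 0

lemma isZero_mk3_X_neg_one : IsZero ((mk3 r₀ r₁ r₂ D₀ D₁ wD).X (-1)) :=
  isZero_V_zero

lemma isZero_mk3_X_three : IsZero ((mk3 r₀ r₁ r₂ D₀ D₁ wD).X 3) :=
  isZero_V_zero

lemma hom_ext_mk3 {X : CochainComplex (ModuleCat ℤ) ℤ} {f g : X ⟶ mk3 r₀ r₁ r₂ D₀ D₁ wD}
    (h₀ : f.f 0 = g.f 0) (h₁ : f.f 1 = g.f 1) (h₂ : f.f 2 = g.f 2) : f = g := by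
  refine HomologicalComplex.hom_ext _ _ fun n => ?_
  induction n using int_cases3 with
  | h0 => exact h₀
  | h1 => exact h₁
  | h2 => exact h₂
  | ho m => exact isZero_V_zero.eq_of_tgt _ _
  | hn m => exact isZero_V_zero.eq_of_tgt _ _

lemma mkHom3_comp_mkHom3 {F₀ : Matrix (Fin s₀) (Fin r₀) ℤ} {F₁ : Matrix (Fin s₁) (Fin r₁) ℤ}
    {F₂ : Matrix (Fin s₂) (Fin r₂) ℤ} {c₀ : F₁ * D₀ = E₀ * F₀} {c₁ : F₂ * D₁ = E₁ * F₁}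
    {G₀ : Matrix (Fin t₀) (Fin s₀) ℤ} {G₁ : Matrix (Fin t₁) (Fin s₁) ℤ}
    {G₂ : Matrix (Fin t₂) (Fin s₂) ℤ} {d₀ : G₁ * E₀ = K₀ * G₀} {d₁ : G₂ * E₁ = K₁ * G₁} :
    (mkHom3 F₀ F₁ F₂ c₀ c₁ : mk3 r₀ r₁ r₂ D₀ D₁ wD ⟶ mk3 s₀ s₁ s₂ E₀ E₁ wE) ≫
        (mkHom3 G₀ G₁ G₂ d₀ d₁ : _ ⟶ mk3 t₀ t₁ t₂ K₀ K₁ wK) =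
      mkHom3 (G₀ * F₀) (G₁ * F₁) (G₂ * F₂)
        (by rw [Matrix.mul_assoc, c₀, ← Matrix.mul_assoc, d₀, Matrix.mul_assoc])
        (by rw [Matrix.mul_assoc, c₁, ← Matrix.mul_assoc, d₁, Matrix.mul_assoc]) :=
  hom_ext_mk3 (mt_comp _ _) (mt_comp _ _) (mt_comp _ _)

lemma mkHom3_add_mkHom3 {F₀ : Matrix (Fin s₀) (Fin r₀) ℤ} {F₁ : Matrix (Fin s₁) (Fin r₁) ℤ}
    {F₂ : Matrix (Fin s₂) (Fin r₂) ℤ} {c₀ : F₁ * D₀ = E₀ * F₀} {c₁ : F₂ * D₁ = E₁ * F₁}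
    {G₀ : Matrix (Fin s₀) (Fin r₀) ℤ} {G₁ : Matrix (Fin s₁) (Fin r₁) ℤ}
    {G₂ : Matrix (Fin s₂) (Fin r₂) ℤ} {d₀ : G₁ * D₀ = E₀ * G₀} {d₁ : G₂ * D₁ = E₁ * G₁} :
    (mkHom3 F₀ F₁ F₂ c₀ c₁ : mk3 r₀ r₁ r₂ D₀ D₁ wD ⟶ mk3 s₀ s₁ s₂ E₀ E₁ wE) +
        mkHom3 G₀ G₁ G₂ d₀ d₁ =
      mkHom3 (F₀ + G₀) (F₁ + G₁) (F₂ + G₂)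
        (by rw [Matrix.add_mul, c₀, d₀, Matrix.mul_add])
        (by rw [Matrix.add_mul, c₁, d₁, Matrix.mul_add]) :=
  hom_ext_mk3 (mt_add _ _).symm (mt_add _ _).symm (mt_add _ _).symm

lemma mkHom3_eq_id {F₀ : Matrix (Fin r₀) (Fin r₀) ℤ} {F₁ : Matrix (Fin r₁) (Fin r₁) ℤ}
    {F₂ : Matrix (Fin r₂) (Fin r₂) ℤ} {c₀ c₁} (h₀ : F₀ = 1) (h₁ : F₁ = 1) (h₂ : F₂ = 1) :
    (mkHom3 F₀ F₁ F₂ c₀ c₁ : mk3 r₀ r₁ r₂ D₀ D₁ wD ⟶ _) = 𝟙 _ := by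
  subst h₀ h₁ h₂
  exact hom_ext_mk3 mt_one mt_one mt_one

lemma mkHom3_eq_zero {F₀ : Matrix (Fin s₀) (Fin r₀) ℤ} {F₁ : Matrix (Fin s₁) (Fin r₁) ℤ}
    {F₂ : Matrix (Fin s₂) (Fin r₂) ℤ} {c₀ c₁} (h₀ : F₀ = 0) (h₁ : F₁ = 0) (h₂ : F₂ = 0) :
    (mkHom3 F₀ F₁ F₂ c₀ c₁ : mk3 r₀ r₁ r₂ D₀ D₁ wD ⟶ mk3 s₀ s₁ s₂ E₀ E₁ wE) = 0 := by
  subst h₀ h₁ h₂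
  exact hom_ext_mk3 mt_zero mt_zero mt_zero

variable (wD wE) in
noncomputable def homotopyHom3 (H₁ : Matrix (Fin s₀) (Fin r₁) ℤ)
    (H₂ : Matrix (Fin s₁) (Fin r₂) ℤ) (i j : ℤ) :
    (mk3 r₀ r₁ r₂ D₀ D₁ wD).X i ⟶ (mk3 s₀ s₁ s₂ E₀ E₁ wE).X j :=
  if h : i = 1 ∧ j = 0 then
    eqToHom (by rw [h.1]; rfl) ≫ (mt H₁ : V r₁ ⟶ V s₀) ≫ eqToHom (by rw [h.2]; rfl)
  else if h : i = 2 ∧ j = 1 then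
    eqToHom (by rw [h.1]; rfl) ≫ (mt H₂ : V r₂ ⟶ V s₁) ≫ eqToHom (by rw [h.2]; rfl)
  else 0

noncomputable def homotopy3 {F₀ : Matrix (Fin s₀) (Fin r₀) ℤ} {F₁ : Matrix (Fin s₁) (Fin r₁) ℤ}
    {F₂ : Matrix (Fin s₂) (Fin r₂) ℤ} {c₀ c₁} {G₀ : Matrix (Fin s₀) (Fin r₀) ℤ}
    {G₁ : Matrix (Fin s₁) (Fin r₁) ℤ} {G₂ : Matrix (Fin s₂) (Fin r₂) ℤ} {d₀ d₁}
    (H₁ : Matrix (Fin s₀) (Fin r₁) ℤ) (H₂ : Matrix (Fin s₁) (Fin r₂) ℤ)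
    (h₀ : F₀ = H₁ * D₀ + G₀) (h₁ : F₁ = H₂ * D₁ + E₀ * H₁ + G₁) (h₂ : F₂ = E₁ * H₂ + G₂) :
    Homotopy (mkHom3 F₀ F₁ F₂ c₀ c₁ : mk3 r₀ r₁ r₂ D₀ D₁ wD ⟶ mk3 s₀ s₁ s₂ E₀ E₁ wE)
      (mkHom3 G₀ G₁ G₂ d₀ d₁) where
  hom := homotopyHom3 wD wE H₁ H₂
  zero i j hij := by
    rw [homotopyHom3, dif_neg, dif_neg]
    · rintro ⟨rfl, rfl⟩; exact hij rfl
    · rintro ⟨rfl, rfl⟩; exact hij rfl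
  comm n := by
    induction n using int_cases3 with
    | h0 =>
      rw [dNext_eq _ (show (ComplexShape.up ℤ).Rel 0 1 by simp),
        prevD_eq _ (show (ComplexShape.up ℤ).Rel (-1) 0 by simp),
        isZero_mk3_X_neg_one.eq_zero_of_tgt (homotopyHom3 wD wE H₁ H₂ 0 (-1)), zero_comp,
        add_zero]
      change mt F₀ = mt D₀ ≫ mt H₁ + mt G₀
      rw [mt_comp, h₀, mt_add]
    | h1 =>
      rw [dNext_eq _ (show (ComplexShape.up ℤ).Rel 1 2 by simp),
        prevD_eq _ (show (ComplexShape.up ℤ).Rel 0 1 by simp)]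
      change mt F₁ = mt D₁ ≫ mt H₂ + mt H₁ ≫ mt E₀ + mt G₁
      rw [mt_comp, mt_comp, h₁, mt_add, mt_add]
    | h2 =>
      rw [dNext_eq _ (show (ComplexShape.up ℤ).Rel 2 3 by simp),
        prevD_eq _ (show (ComplexShape.up ℤ).Rel 1 2 by simp),
        isZero_mk3_X_three.eq_zero_of_tgt ((mk3 r₀ r₁ r₂ D₀ D₁ wD).d 2 3), zero_comp,
        zero_add]
      change mt F₂ = mt H₂ ≫ mt E₁ + mt G₂
      rw [mt_comp, h₂, mt_add]
    | ho m => exact isZero_V_zero.eq_of_tgt _ _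
    | hn m => exact isZero_V_zero.eq_of_tgt _ _

noncomputable def degZeroMatrix (f : mk3 r₀ r₁ r₂ D₀ D₁ wD ⟶ mk3 s₀ s₁ s₂ E₀ E₁ wE) :
    Matrix (Fin s₀) (Fin r₀) ℤ :=
  let f₀ : V r₀ ⟶ V s₀ := f.f 0
  LinearMap.toMatrix' f₀.hom

lemma degZeroMatrix_comp (f : mk3 r₀ r₁ r₂ D₀ D₁ wD ⟶ mk3 s₀ s₁ s₂ E₀ E₁ wE)
    (g : mk3 s₀ s₁ s₂ E₀ E₁ wE ⟶ mk3 t₀ t₁ t₂ K₀ K₁ wK) :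
    degZeroMatrix (f ≫ g) = degZeroMatrix g * degZeroMatrix f :=
  LinearMap.toMatrix'_comp _ _

lemma degZeroMatrix_id : degZeroMatrix (𝟙 (mk3 r₀ r₁ r₂ D₀ D₁ wD)) = 1 :=
  LinearMap.toMatrix'_id

lemma degZeroMatrix_neg (f : mk3 r₀ r₁ r₂ D₀ D₁ wD ⟶ mk3 s₀ s₁ s₂ E₀ E₁ wE) :
    degZeroMatrix (-f) = -degZeroMatrix f :=
  map_neg _ _

lemma degZeroMatrix_mkHom3 {F₀ : Matrix (Fin s₀) (Fin r₀) ℤ} {F₁ : Matrix (Fin s₁) (Fin r₁) ℤ}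
    {F₂ : Matrix (Fin s₂) (Fin r₂) ℤ} {c₀ c₁} :
    degZeroMatrix (mkHom3 F₀ F₁ F₂ c₀ c₁ : mk3 r₀ r₁ r₂ D₀ D₁ wD ⟶ mk3 s₀ s₁ s₂ E₀ E₁ wE) = F₀ :=
  toMatrix'_mt F₀

lemma exists_degZeroMatrix_eq_of_homotopy
    {f g : mk3 r₀ r₁ r₂ D₀ D₁ wD ⟶ mk3 s₀ s₁ s₂ E₀ E₁ wE} (h : Homotopy f g) :
    ∃ H : Matrix (Fin s₀) (Fin r₁) ℤ, degZeroMatrix f = H * D₀ + degZeroMatrix g := by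
  have hc := h.comm 0
  rw [dNext_eq h.hom (show (ComplexShape.up ℤ).Rel 0 1 by simp),
    prevD_eq h.hom (show (ComplexShape.up ℤ).Rel (-1) 0 by simp),
    isZero_mk3_X_neg_one.eq_zero_of_tgt (h.hom 0 (-1)), zero_comp, add_zero,
    mk3_d_zero_one] at hc
  exact ⟨_, (congrArg (fun φ : V r₀ ⟶ V s₀ => LinearMap.toMatrix' φ.hom) hc).trans
    (toMatrix'_mt_comp_add D₀ (h.hom 1 0) (g.f 0))⟩

lemma exists_degZeroMatrix_eq_of_map_eq {f g : mk3 r₀ r₁ r₂ D₀ D₁ wD ⟶ mk3 s₀ s₁ s₂ E₀ E₁ wE}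
    (h : Q.map f = Q.map g) :
    ∃ H : Matrix (Fin s₀) (Fin r₁) ℤ, degZeroMatrix f = H * D₀ + degZeroMatrix g :=
  exists_degZeroMatrix_eq_of_homotopy (HomotopyCategory.homotopyOfEq _ _ h)

end Mk3

/-- With no degree-`1` term, homotopies do not change degree-`0` components. -/
lemma isUnit_degZeroMatrix_of_isIso {r₀ r₂ : ℕ} {D₀ : Matrix (Fin 0) (Fin r₀) ℤ}
    {D₁ : Matrix (Fin r₂) (Fin 0) ℤ} {wD : D₁ * D₀ = 0}
    (ψ : mk3 r₀ 0 r₂ D₀ D₁ wD ⟶ mk3 r₀ 0 r₂ D₀ D₁ wD) [hψ : IsIso (Q.map ψ)] :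
    IsUnit (degZeroMatrix ψ) := by
  obtain ⟨χ, hχ⟩ := Q.map_surjective (inv (Q.map ψ))
  obtain ⟨H, hH⟩ := exists_degZeroMatrix_eq_of_map_eq (f := ψ ≫ χ) (g := 𝟙 _)
    (by rw [Functor.map_comp, hχ, IsIso.hom_inv_id, Q.map_id])
  obtain ⟨H', hH'⟩ := exists_degZeroMatrix_eq_of_map_eq (f := χ ≫ ψ) (g := 𝟙 _)
    (by rw [Functor.map_comp, hχ, IsIso.inv_hom_id, Q.map_id])
  rw [degZeroMatrix_comp, degZeroMatrix_id, Matrix.empty_mul_empty, zero_add] at hH hH'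
  exact ⟨⟨_, _, hH', hH⟩, rfl⟩

lemma square_commutes (a : ℤ) :
    Q.map (gm a) ≫ Q.map (cm a) = Q.map (bm a) ≫ Q.map (gm' a) := by
  unfold gm cm bm gm' Bc Bc' Cc Cc'
  rw [← Functor.map_comp, ← Functor.map_comp, mkHom3_comp_mkHom3, mkHom3_comp_mkHom3]
  exact HomotopyCategory.eq_of_homotopy _ _
    (homotopy3 !![0, 1] 0 (by simp; ring) (Subsingleton.elim _ _) (Subsingleton.elim _ _))

noncomputable def sumComplex (a : ℤ) : CochainComplex (ModuleCat ℤ) ℤ :=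
  mk3 2 2 0 !![a ^ 2, 0; 0, a ^ 2] 0 (mat_eq_of_rows0 _ _)

noncomputable def sumFst (a : ℤ) : sumComplex a ⟶ Bc' a :=
  mkHom3 !![1, 0] !![1, 0] 0 (by simp) (Subsingleton.elim _ _)

noncomputable def sumSnd (a : ℤ) : sumComplex a ⟶ Cc a :=
  mkHom3 !![0, 1] !![0, 1] 0 (by simp) (Subsingleton.elim _ _)

noncomputable def sumInl (a : ℤ) : Bc' a ⟶ sumComplex a :=
  mkHom3 !![1; 0] !![1; 0] 0 (by ext i j; fin_cases i <;> fin_cases j <;> simp)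
    (Subsingleton.elim _ _)

noncomputable def sumInr (a : ℤ) : Cc a ⟶ sumComplex a :=
  mkHom3 !![0; 1] !![0; 1] 0 (by ext i j; fin_cases i <;> fin_cases j <;> simp)
    (Subsingleton.elim _ _)

lemma sumInl_comp_sumFst (a : ℤ) : sumInl a ≫ sumFst a = 𝟙 _ :=
  mkHom3_comp_mkHom3.trans (mkHom3_eq_id (by ext i j; fin_cases i; fin_cases j; simp)
    (by ext i j; fin_cases i; fin_cases j; simp) (Subsingleton.elim _ _))

lemma sumInl_comp_sumSnd (a : ℤ) : sumInl a ≫ sumSnd a = 0 :=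
  mkHom3_comp_mkHom3.trans (mkHom3_eq_zero (by ext i j; fin_cases i; fin_cases j; simp)
    (by ext i j; fin_cases i; fin_cases j; simp) (Subsingleton.elim _ _))

lemma sumInr_comp_sumFst (a : ℤ) : sumInr a ≫ sumFst a = 0 :=
  mkHom3_comp_mkHom3.trans (mkHom3_eq_zero (by ext i j; fin_cases i; fin_cases j; simp)
    (by ext i j; fin_cases i; fin_cases j; simp) (Subsingleton.elim _ _))

lemma sumInr_comp_sumSnd (a : ℤ) : sumInr a ≫ sumSnd a = 𝟙 _ :=
  mkHom3_comp_mkHom3.trans (mkHom3_eq_id (by ext i j; fin_cases i; fin_cases j; simp)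
    (by ext i j; fin_cases i; fin_cases j; simp) (Subsingleton.elim _ _))

lemma sumFst_comp_sumInl_add_sumSnd_comp_sumInr (a : ℤ) :
    sumFst a ≫ sumInl a + sumSnd a ≫ sumInr a = 𝟙 (sumComplex a) := by
  unfold sumFst sumInl sumSnd sumInr sumComplex Bc' Cc
  rw [mkHom3_comp_mkHom3, mkHom3_comp_mkHom3, mkHom3_add_mkHom3]
  exact mkHom3_eq_id (by ext i j; fin_cases i <;> fin_cases j <;> simp)
    (by ext i j; fin_cases i <;> fin_cases j <;> simp) (Subsingleton.elim _ _)

noncomputable def sumBicone (a : ℤ) : BinaryBicone (Bc' a) (Cc a) where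
  pt := sumComplex a
  fst := sumFst a
  snd := sumSnd a
  inl := sumInl a
  inr := sumInr a
  inl_fst := sumInl_comp_sumFst a
  inl_snd := sumInl_comp_sumSnd a
  inr_fst := sumInr_comp_sumFst a
  inr_snd := sumInr_comp_sumSnd a

noncomputable def sumBiconeIsBilimit (a : ℤ) : (sumBicone a).IsBilimit :=
  isBinaryBilimitOfTotal _ (sumFst_comp_sumInl_add_sumSnd_comp_sumInr a)

noncomputable def sumIso (a : ℤ) : Q.obj (sumComplex a) ≅ Q.obj (Bc' a) ⊞ Q.obj (Cc a) :=
  have := preservesBinaryBiproducts_of_preservesBiproducts Q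
  biprod.uniqueUpToIso _ _ (isBinaryBilimitOfPreserves Q (sumBiconeIsBilimit a))

lemma sumIso_hom (a : ℤ) :
    (sumIso a).hom = biprod.lift (Q.map (sumFst a)) (Q.map (sumSnd a)) :=
  rfl

lemma map_sumInr_comp_sumIso_hom (a : ℤ) : Q.map (sumInr a) ≫ (sumIso a).hom = biprod.inr := by
  rw [sumIso_hom, biprod.lift_eq, Preadditive.comp_add, ← Category.assoc, ← Category.assoc,
    ← Functor.map_comp, ← Functor.map_comp, sumInr_comp_sumFst, sumInr_comp_sumSnd,
    Functor.map_zero, Q.map_id, zero_comp, Category.id_comp, zero_add]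

noncomputable def bgLift (a : ℤ) : Bc a ⟶ sumComplex a :=
  mkHom3 !![1; a] !![0, 1; -1, 0] 0
    (by ext i j; fin_cases i <;> fin_cases j <;> simp; ring) (Subsingleton.elim _ _)

noncomputable def bgCokernel (a : ℤ) : sumComplex a ⟶ Cc' :=
  mkHom3 !![-a, 1] 0 0 (Subsingleton.elim _ _) (Subsingleton.elim _ _)

lemma bgLift_comp_sumFst (a : ℤ) : bgLift a ≫ sumFst a = bm a :=
  mkHom3_comp_mkHom3.trans (by congr 1 <;> ext i j <;> fin_cases i <;> fin_cases j <;> simp)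

lemma bgLift_comp_sumSnd (a : ℤ) : bgLift a ≫ sumSnd a = gm a :=
  mkHom3_comp_mkHom3.trans (by congr 1 <;> ext i j <;> fin_cases i <;> fin_cases j <;> simp)

lemma map_bgLift_comp_sumIso_hom (a : ℤ) :
    Q.map (bgLift a) ≫ (sumIso a).hom = biprod.lift (Q.map (bm a)) (Q.map (gm a)) := by
  rw [sumIso_hom, biprod.lift_eq, biprod.lift_eq, Preadditive.comp_add, ← Category.assoc,
    ← Category.assoc, ← Functor.map_comp, ← Functor.map_comp, bgLift_comp_sumFst,
    bgLift_comp_sumSnd]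

lemma bgLift_comp_bgCokernel (a : ℤ) : bgLift a ≫ bgCokernel a = 0 :=
  mkHom3_comp_mkHom3.trans (mkHom3_eq_zero (by ext i j; fin_cases i; fin_cases j; simp)
    (Subsingleton.elim _ _) (Subsingleton.elim _ _))

noncomputable def bgShortComplex (a : ℤ) : ShortComplex (CochainComplex (ModuleCat ℤ) ℤ) :=
  ShortComplex.mk (bgLift a) (bgCokernel a) (bgLift_comp_bgCokernel a)

noncomputable def bgSplitting (a : ℤ) :
    ∀ n, ((bgShortComplex a).map (HomologicalComplex.eval _ _ n)).Splitting
  | 0 =>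
    { r := mt !![1, 0]
      s := mt !![0; 1]
      f_r := mt_comp_eq_id (k := 1) (l := 2) (by ext i j; fin_cases i; fin_cases j; simp)
      s_g := mt_comp_eq_id (k := 1) (l := 2) (by ext i j; fin_cases i; fin_cases j; simp)
      id := mt_comp_add_mt_comp_eq_id (k := 2) (l := 1) (m := 1)
        (by ext i j; fin_cases i <;> fin_cases j <;> simp) }
  | 1 => .ofIsIsoOfIsZero _
      ⟨mt !![0, -1; 1, 0],
        mt_comp_eq_id (k := 2) (l := 2) (by ext i j; fin_cases i <;> fin_cases j <;> simp),
        mt_comp_eq_id (k := 2) (l := 2) (by ext i j; fin_cases i <;> fin_cases j <;> simp)⟩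
      isZero_V_zero
  | 2 => .ofIsIsoOfIsZero _ (isZero_V_zero.isIso isZero_V_zero _) isZero_V_zero
  | Int.ofNat (_ + 3) => .ofIsIsoOfIsZero _ (isZero_V_zero.isIso isZero_V_zero _) isZero_V_zero
  | Int.negSucc _ => .ofIsIsoOfIsZero _ (isZero_V_zero.isIso isZero_V_zero _) isZero_V_zero

lemma bgTriangle_distinguished (a : ℤ) :
    CochainComplex.trianglehOfDegreewiseSplit _ (bgSplitting a) ∈
      distTriang (HomotopyCategory (ModuleCat ℤ) (ComplexShape.up ℤ)) :=
  (HomotopyCategory.distinguished_iff_iso_trianglehOfDegreewiseSplit _).2 ⟨_, _, ⟨Iso.refl _⟩⟩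

lemma degZeroMatrix_sumInr_comp_bgCokernel (a : ℤ) :
    degZeroMatrix (sumInr a ≫ bgCokernel a) = 1 :=
  calc degZeroMatrix (sumInr a ≫ bgCokernel a) = !![-a, 1] * !![0; 1] :=
        (degZeroMatrix_comp _ _).trans (congrArg₂ _ degZeroMatrix_mkHom3 degZeroMatrix_mkHom3)
    _ = 1 := by ext i j; fin_cases i; fin_cases j; simp

lemma not_sq_dvd_add_of_isUnit {a u : ℤ} (ha : 3 ≤ a) (hu : IsUnit u) : ¬ a ^ 2 ∣ u + 1 + a := by
  have hpos : 0 < u + 1 + a := by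
    rcases Int.isUnit_iff.1 hu with rfl | rfl <;> linarith
  have hlt : u + 1 + a < a ^ 2 := by
    rcases Int.isUnit_iff.1 hu with rfl | rfl <;> nlinarith
  exact fun h => hpos.ne' (Int.eq_zero_of_dvd_of_nonneg_of_lt hpos.le hlt h)

lemma map_ne_map_neg_cm {a : ℤ} (ha : 3 ≤ a) (f : Cc a ⟶ Cc')
    (hf : IsUnit (degZeroMatrix f 0 0)) : Q.map f ≠ Q.map (-cm a) := by
  intro h
  obtain ⟨H, hH⟩ := exists_degZeroMatrix_eq_of_map_eq h
  have hc : degZeroMatrix (-cm a) = -!![1 + a] :=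
    (degZeroMatrix_neg _).trans (congrArg _ degZeroMatrix_mkHom3)
  rw [hc] at hH
  have h₀₀ : degZeroMatrix f 0 0 = H 0 0 * a ^ 2 - (1 + a) := by
    simpa [Matrix.mul_apply, sub_eq_add_neg] using congrFun (congrFun hH 0) 0
  exact not_sq_dvd_add_of_isUnit ha hf ⟨H 0 0, by rw [h₀₀]; ring⟩

lemma map_sumInr_comp_bgCokernel_comp_ne {a : ℤ} (ha : 3 ≤ a) (ψ : Cc' ⟶ Cc')
    [IsIso (Q.map ψ)] : Q.map ((sumInr a ≫ bgCokernel a) ≫ ψ) ≠ Q.map (-cm a) := by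
  have hmat : degZeroMatrix ((sumInr a ≫ bgCokernel a) ≫ ψ) = degZeroMatrix ψ :=
    (degZeroMatrix_comp _ _).trans ((congrArg (degZeroMatrix ψ * ·)
      (degZeroMatrix_sumInr_comp_bgCokernel a)).trans (Matrix.mul_one _))
  have hψ : IsUnit (degZeroMatrix ψ 0 0) := by
    simpa [Matrix.det_fin_one] using
      (Matrix.isUnit_iff_isUnit_det _).1 (isUnit_degZeroMatrix_of_isIso ψ (hψ := ‹_›))
  exact map_ne_map_neg_cm ha _ ((congrArg (fun M => IsUnit (M 0 0)) hmat).mpr hψ)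

end KbFree

open KbFree in
/-- For `a ≥ 3`, in the bounded homotopy category of complexes of finitely generated free
abelian groups, the square with sides `g, g', b, c` commutes (i.e. `c ∘ g` and `g' ∘ b`
are homotopic), but it is not homotopy cartesian: there is no `δ : C' ⟶ B⟦1⟧` making
`B → B' ⊕ C → C' → B⟦1⟧` (with first map of components `(b, g)` and second map of
components `(g', -c)`) a distinguished triangle. -/
theorem square_commutes_but_not_homotopy_cartesian (a : ℤ) (ha : 3 ≤ a) :
    (Q.map (gm a) ≫ Q.map (cm a) = Q.map (bm a) ≫ Q.map (gm' a)) ∧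
    ¬ ∃ δ : Q.obj Cc' ⟶ (Q.obj (Bc a))⟦(1 : ℤ)⟧,
        Triangle.mk (biprod.lift (Q.map (bm a)) (Q.map (gm a)))
            (biprod.desc (Q.map (gm' a)) (-Q.map (cm a))) δ ∈
          distTriang (HomotopyCategory (ModuleCat ℤ) (ComplexShape.up ℤ)) := by
  refine ⟨square_commutes a, ?_⟩
  rintro ⟨δ, hT⟩
  let e := isoTriangleOfIso₁₂ _ _ (bgTriangle_distinguished a) hT (Iso.refl _) (sumIso a)
    ((map_bgLift_comp_sumIso_hom a).trans (Category.id_comp _).symm)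
  obtain ⟨ψ, hψ⟩ : ∃ ψ : Cc' ⟶ Cc', Q.map ψ = e.hom.hom₃ := Q.map_surjective _
  have : IsIso (Q.map ψ) := by
    rw [hψ]
    exact (Triangle.π₃.mapIso e).isIso_hom
  have h₂ : Q.map (bgCokernel a) ≫ Q.map ψ =
      (sumIso a).hom ≫ biprod.desc (Q.map (gm' a)) (-Q.map (cm a)) := by
    rw [hψ]
    exact e.hom.comm₂
  apply map_sumInr_comp_bgCokernel_comp_ne ha ψ
  rw [Functor.map_comp, Functor.map_comp, Category.assoc, h₂, ← Category.assoc,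
    map_sumInr_comp_sumIso_hom, biprod.inr_desc, Functor.map_neg]
end
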